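/- arXiv:1604.05472 — 2 statements merged into one kernel-verified Lean document; each statement's English description precedes it below -/
import Mathlib

section
/- Suppose a subset L_sc ⊆ L is feasible for Set-Cover with cost c(L_sc) ≤ f_sc · OPT_sc, a subset L_kp ⊆ L is feasible for Minimization Knapsack with cost c(L_kp) ≤ f_kp · OPT_minkp (where f_sc, f_kp ≥ 0), and the Demand-and-Set-Cover problem has at least one feasible solution. Then L_sc ∪ L_kp is feasible for Demand-and-Set-Cover and its cost satisfies c(L_sc ∪ L_kp) ≤ (f_sc + f_kp) · OPT_dsc. -/
/-- A selection of candidate sites is feasible for Set-Cover (SC) if its cover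
sets cover all locations of interest. -/
def SCFeasible {ι κ : Type*} (S : ι → Set κ) (A : Finset ι) : Prop :=
  (⋃ i ∈ A, S i) = Set.univ

/-- A selection of candidate sites is feasible for Minimization Knapsack (MinKP)
if its total demand meets the demand target `D`. -/
def KPFeasible {ι : Type*} (d : ι → ℝ) (D : ℝ) (A : Finset ι) : Prop :=
  D ≤ ∑ i ∈ A, d i

/-- A selection of candidate sites is feasible for Demand-and-Set-Cover (DSC)
if it is feasible for both SC and MinKP. -/
def DSCFeasible {ι κ : Type*} (S : ι → Set κ) (d : ι → ℝ) (D : ℝ) (A : Finset ι) : Prop :=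
  SCFeasible S A ∧ KPFeasible d D A

theorem stmt_0 {ι κ : Type*} [Fintype ι] [Nonempty ι] [DecidableEq ι] [Fintype κ]
    (c d : ι → ℝ) (hc : ∀ i, 0 ≤ c i) (hd : ∀ i, 0 ≤ d i)
    (S : ι → Set κ) (D : ℝ) (hD : 0 ≤ D)
    (fsc fkp OPTsc OPTkp OPTdsc : ℝ) (hfsc : 0 ≤ fsc) (hfkp : 0 ≤ fkp)
    -- `OPTsc` is the minimum cost of a feasible solution to SC
    (hOPTsc : IsLeast {x | ∃ A : Finset ι, SCFeasible S A ∧ ∑ i ∈ A, c i = x} OPTsc)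
    -- `OPTkp` is the minimum cost of a feasible solution to MinKP
    (hOPTkp : IsLeast {x | ∃ A : Finset ι, KPFeasible d D A ∧ ∑ i ∈ A, c i = x} OPTkp)
    -- DSC has a feasible solution and `OPTdsc` is the minimum cost of one
    (hOPTdsc : IsLeast {x | ∃ A : Finset ι, DSCFeasible S d D A ∧ ∑ i ∈ A, c i = x} OPTdsc)
    (Lsc Lkp : Finset ι)
    (hLsc : SCFeasible S Lsc) (hLscCost : ∑ i ∈ Lsc, c i ≤ fsc * OPTsc)
    (hLkp : KPFeasible d D Lkp) (hLkpCost : ∑ i ∈ Lkp, c i ≤ fkp * OPTkp) :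
    DSCFeasible S d D (Lsc ∪ Lkp) ∧
      ∑ i ∈ Lsc ∪ Lkp, c i ≤ (fsc + fkp) * OPTdsc := by
  obtain ⟨⟨Adsc, hAdsc, hAcost⟩, hlb⟩ := hOPTdsc
  have hsc_le : OPTsc ≤ OPTdsc := by
    rw [← hAcost]; exact hOPTsc.2 ⟨Adsc, hAdsc.1, rfl⟩
  have hkp_le : OPTkp ≤ OPTdsc := by
    rw [← hAcost]; exact hOPTkp.2 ⟨Adsc, hAdsc.2, rfl⟩
  have hdsc_nonneg : 0 ≤ OPTdsc := by
    rw [← hAcost]; exact Finset.sum_nonneg fun i _ => hc i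
  constructor
  · constructor
    · unfold SCFeasible at hLsc ⊢
      apply Set.eq_univ_of_univ_subset
      rw [← hLsc]
      exact Set.biUnion_subset_biUnion_left (fun i hi => Finset.mem_union_left _ hi)
    · unfold KPFeasible at hLkp ⊢
      refine hLkp.trans (Finset.sum_le_sum_of_subset_of_nonneg Finset.subset_union_right
        fun i _ _ => hd i)
  · have hinter : 0 ≤ ∑ i ∈ Lsc ∩ Lkp, c i := Finset.sum_nonneg fun i _ => hc i
    have hui := Finset.sum_union_inter (s₁ := Lsc) (s₂ := Lkp) (f := c)
    calc ∑ i ∈ Lsc ∪ Lkp, c i ≤ ∑ i ∈ Lsc, c i + ∑ i ∈ Lkp, c i := by linarith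
      _ ≤ fsc * OPTsc + fkp * OPTkp := add_le_add hLscCost hLkpCost
      _ ≤ fsc * OPTdsc + fkp * OPTdsc := add_le_add
          (mul_le_mul_of_nonneg_left hsc_le hfsc) (mul_le_mul_of_nonneg_left hkp_le hfkp)
      _ = (fsc + fkp) * OPTdsc := (add_mul ..).symm
end

section
/- Let α ∈ [0,1], assume R^min < R^max and Σ_{i∈L} d_i > 0, and let F(r) = α·D*(r)/(Σ_{i∈L} d_i) + (1−α)·(R^max − r)/(R^max − R^min). Then the supremum of F over the interval [R^min, R^max] is attained at some r in the finite set R = {dist(ℓ,i) : ℓ ∈ I, i ∈ L, dist(ℓ,i) ≥ R^min}; in particular, sup_{r ∈ [R^min, R^max]} F(r) = max_{r ∈ R} F(r). -/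
/-- For a reachability radius `r`, the cover set of site `i` is the set of
locations of interest within distance `r` of `i`. -/
def coverSet {ι κ : Type*} (dist : κ → ι → ℝ) (r : ℝ) (i : ι) : Set κ :=
  {ℓ | dist ℓ i ≤ r}

/-- A selection `A` of candidate sites is feasible for the Mixed Pack-and-Cover
problem `MPC(r)` with budget `B` if its total cost is within budget and the
cover sets of its sites cover all locations of interest. -/
def MPCFeasible {ι κ : Type*} (dist : κ → ι → ℝ) (c : ι → ℝ) (B r : ℝ) (A : Finset ι) : Prop :=
  ∑ i ∈ A, c i ≤ B ∧ (⋃ i ∈ A, coverSet dist r i) = Set.univ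

/-- `R^min`: the maximum over locations of interest of the distance to the
nearest candidate site. -/
noncomputable def RMinRadius {ι κ : Type*} [Fintype ι] [Fintype κ] [Nonempty ι] [Nonempty κ]
    (dist : κ → ι → ℝ) : ℝ :=
  Finset.univ.sup' Finset.univ_nonempty fun ℓ : κ =>
    Finset.univ.inf' Finset.univ_nonempty fun i : ι => dist ℓ i

/-- `R^max`: the maximum over locations of interest of the distance to the
farthest candidate site. -/
noncomputable def RMaxRadius {ι κ : Type*} [Fintype ι] [Fintype κ] [Nonempty ι] [Nonempty κ]
    (dist : κ → ι → ℝ) : ℝ :=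
  Finset.univ.sup' Finset.univ_nonempty fun ℓ : κ =>
    Finset.univ.sup' Finset.univ_nonempty fun i : ι => dist ℓ i

/-- The set `R` of all distances `dist ℓ i` that are at least `R^min`. -/
noncomputable def distSet {ι κ : Type*} [Fintype ι] [Fintype κ] [Nonempty ι] [Nonempty κ]
    (dist : κ → ι → ℝ) : Finset ℝ :=
  (Finset.univ.image fun p : κ × ι => dist p.1 p.2).filter fun x => RMinRadius dist ≤ x

/-
Idea: `D*(r)` depends on `r` only through the set of pairs `(ℓ, i)` with `dist ℓ i ≤ r`, so it is
unchanged when `r ≥ R^min` is rounded down to the largest element `ρ` of `R` below it, while the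
second term of `F` can only grow. Hence `F r ≤ F ρ`, and the maximum of `F` over the finite set `R`
bounds `F` on the whole interval.
-/

section Feasibility

variable {ι κ : Type*} {dist : κ → ι → ℝ} {c : ι → ℝ} {B r ρ : ℝ}

theorem MPCFeasible_congr (h : ∀ ℓ i, dist ℓ i ≤ r ↔ dist ℓ i ≤ ρ) :
    MPCFeasible dist c B r = MPCFeasible dist c B ρ := by
  have hcover : coverSet dist r = coverSet dist ρ := funext fun i => Set.ext fun ℓ => h ℓ i
  funext A
  rw [MPCFeasible, MPCFeasible, hcover]

theorem optimalDemand_congr {d : ι → ℝ} {D : ℝ → ℝ}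
    (hD : ∀ r : ℝ, (∃ A : Finset ι, MPCFeasible dist c B r A) →
      IsGreatest {x | ∃ A : Finset ι, MPCFeasible dist c B r A ∧ ∑ i ∈ A, d i = x} (D r))
    (hD0 : ∀ r : ℝ, ¬(∃ A : Finset ι, MPCFeasible dist c B r A) → D r = 0)
    (h : MPCFeasible dist c B r = MPCFeasible dist c B ρ) : D r = D ρ := by
  by_cases hfeas : ∃ A, MPCFeasible dist c B r A
  · have hgreatest := hD r hfeas
    rw [h] at hfeas hgreatest
    exact hgreatest.unique (hD ρ hfeas)
  · rw [hD0 r hfeas, hD0 ρ (h ▸ hfeas)]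

end Feasibility

section Radii

variable {ι κ : Type*} [Fintype ι] [Nonempty ι] [Fintype κ] [Nonempty κ] (dist : κ → ι → ℝ)

theorem mem_distSet {x : ℝ} :
    x ∈ distSet dist ↔ (∃ ℓ i, dist ℓ i = x) ∧ RMinRadius dist ≤ x := by
  simp [distSet]

theorem RMinRadius_mem_distSet : RMinRadius dist ∈ distSet dist := by
  obtain ⟨ℓ, -, hℓ⟩ := Finset.exists_mem_eq_sup' Finset.univ_nonempty
    fun ℓ : κ => Finset.univ.inf' Finset.univ_nonempty fun i : ι => dist ℓ i
  obtain ⟨i, -, hi⟩ := Finset.exists_mem_eq_inf' Finset.univ_nonempty fun i : ι => dist ℓ i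
  exact (mem_distSet dist).2 ⟨⟨ℓ, i, by rw [RMinRadius, hℓ, hi]⟩, le_rfl⟩

theorem le_RMaxRadius (ℓ : κ) (i : ι) : dist ℓ i ≤ RMaxRadius dist :=
  (Finset.le_sup' (fun i => dist ℓ i) (Finset.mem_univ i)).trans
    (Finset.le_sup' (fun ℓ => Finset.univ.sup' Finset.univ_nonempty fun i => dist ℓ i)
      (Finset.mem_univ ℓ))

theorem mem_Icc_of_mem_distSet {x : ℝ} (hx : x ∈ distSet dist) :
    x ∈ Set.Icc (RMinRadius dist) (RMaxRadius dist) := by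
  obtain ⟨⟨ℓ, i, rfl⟩, hmin⟩ := (mem_distSet dist).1 hx
  exact ⟨hmin, le_RMaxRadius dist ℓ i⟩

theorem RMinRadius_le_RMaxRadius : RMinRadius dist ≤ RMaxRadius dist :=
  (mem_Icc_of_mem_distSet dist (RMinRadius_mem_distSet dist)).2

theorem exists_mem_distSet_le_and_dist_le_iff {r : ℝ} (hr : RMinRadius dist ≤ r) :
    ∃ ρ ∈ distSet dist, ρ ≤ r ∧ ∀ ℓ i, dist ℓ i ≤ r ↔ dist ℓ i ≤ ρ := by
  classical
  set below := (distSet dist).filter (· ≤ r)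
  have hne : below.Nonempty := ⟨_, Finset.mem_filter.2 ⟨RMinRadius_mem_distSet dist, hr⟩⟩
  obtain ⟨hρ, hρr⟩ := Finset.mem_filter.1 (below.max'_mem hne)
  refine ⟨below.max' hne, hρ, hρr, fun ℓ i => ⟨fun hle => ?_, fun hle => hle.trans hρr⟩⟩
  -- a distance in `(ρ, r]` would lie in `below`; one below `R^min` is below `ρ ∈ distSet` anyway
  by_cases hmin : RMinRadius dist ≤ dist ℓ i
  · exact below.le_max' _ (Finset.mem_filter.2 ⟨(mem_distSet dist).2 ⟨⟨ℓ, i, rfl⟩, hmin⟩, hle⟩)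
  · exact (le_of_not_ge hmin).trans ((mem_distSet dist).1 hρ).2

end Radii

theorem stmt_8_general {ι κ : Type*} [Fintype ι] [Nonempty ι] [Fintype κ] [Nonempty κ]
    (dist : κ → ι → ℝ)
    (c d : ι → ℝ)
    (B : ℝ)
    (α : ℝ) (hα : α ∈ Set.Icc (0 : ℝ) 1)
    (Dstar : ℝ → ℝ)
    -- if `MPC(r)` is feasible, `Dstar r` is the maximum demand of a feasible selection
    (hDstar : ∀ r : ℝ, (∃ A : Finset ι, MPCFeasible dist c B r A) →
      IsGreatest {x | ∃ A : Finset ι, MPCFeasible dist c B r A ∧ ∑ i ∈ A, d i = x} (Dstar r))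
    -- if `MPC(r)` is infeasible, `Dstar r = 0`
    (hDstar0 : ∀ r : ℝ, ¬(∃ A : Finset ι, MPCFeasible dist c B r A) → Dstar r = 0)
    (F : ℝ → ℝ)
    (hF : ∀ r : ℝ, F r = α * Dstar r / (∑ i : ι, d i) +
      (1 - α) * (RMaxRadius dist - r) / (RMaxRadius dist - RMinRadius dist)) :
    -- the supremum of `F` over `[R^min, R^max]` is attained at some `r₀ ∈ R`,
    -- and it equals the maximum of `F` over `R`
    ∃ r₀ ∈ distSet dist,
      r₀ ∈ Set.Icc (RMinRadius dist) (RMaxRadius dist) ∧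
      IsGreatest (F '' Set.Icc (RMinRadius dist) (RMaxRadius dist)) (F r₀) ∧
      ∀ s ∈ distSet dist, F s ≤ F r₀ := by
  obtain ⟨-, hα1⟩ := hα
  have hF_le : ∀ r ρ, ρ ≤ r → Dstar r = Dstar ρ → F r ≤ F ρ := by
    intro r ρ hρr hD
    have hden : 0 ≤ RMaxRadius dist - RMinRadius dist :=
      sub_nonneg.2 (RMinRadius_le_RMaxRadius dist)
    rw [hF r, hF ρ, hD]
    gcongr
  obtain ⟨r₀, hr₀, hmax⟩ := (distSet dist).exists_max_image F ⟨_, RMinRadius_mem_distSet dist⟩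
  have hr₀Icc := mem_Icc_of_mem_distSet dist hr₀
  refine ⟨r₀, hr₀, hr₀Icc, ⟨⟨r₀, hr₀Icc, rfl⟩, ?_⟩, hmax⟩
  rintro _ ⟨r, hr, rfl⟩
  obtain ⟨ρ, hρ, hρr, hdist⟩ := exists_mem_distSet_le_and_dist_le_iff dist hr.1
  have hD : Dstar r = Dstar ρ := optimalDemand_congr hDstar hDstar0 (MPCFeasible_congr hdist)
  exact (hF_le r ρ hρr hD).trans (hmax ρ hρ)

theorem stmt_8 {ι κ : Type*} [Fintype ι] [Nonempty ι] [Fintype κ] [Nonempty κ]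
    (dist : κ → ι → ℝ) (hdist : ∀ ℓ i, 0 ≤ dist ℓ i)
    (c d : ι → ℝ) (hc : ∀ i, 0 ≤ c i) (hd : ∀ i, 0 ≤ d i)
    (B : ℝ) (hB : 0 ≤ B)
    (α : ℝ) (hα : α ∈ Set.Icc (0 : ℝ) 1)
    (hRR : RMinRadius dist < RMaxRadius dist)
    (hdpos : 0 < ∑ i : ι, d i)
    (Dstar : ℝ → ℝ)
    -- if `MPC(r)` is feasible, `Dstar r` is the maximum demand of a feasible selection
    (hDstar : ∀ r : ℝ, (∃ A : Finset ι, MPCFeasible dist c B r A) →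
      IsGreatest {x | ∃ A : Finset ι, MPCFeasible dist c B r A ∧ ∑ i ∈ A, d i = x} (Dstar r))
    -- if `MPC(r)` is infeasible, `Dstar r = 0`
    (hDstar0 : ∀ r : ℝ, ¬(∃ A : Finset ι, MPCFeasible dist c B r A) → Dstar r = 0)
    (F : ℝ → ℝ)
    (hF : ∀ r : ℝ, F r = α * Dstar r / (∑ i : ι, d i) +
      (1 - α) * (RMaxRadius dist - r) / (RMaxRadius dist - RMinRadius dist)) :
    -- the supremum of `F` over `[R^min, R^max]` is attained at some `r₀ ∈ R`,
    -- and it equals the maximum of `F` over `R`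
    ∃ r₀ ∈ distSet dist,
      r₀ ∈ Set.Icc (RMinRadius dist) (RMaxRadius dist) ∧
      IsGreatest (F '' Set.Icc (RMinRadius dist) (RMaxRadius dist)) (F r₀) ∧
      ∀ s ∈ distSet dist, F s ≤ F r₀ :=
  stmt_8_general dist c d B α hα Dstar hDstar hDstar0 F hF
end
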